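/- For every word t over A of length ℓ ≥ 4, there exists an index i with i + 3^{ℓ-2} − 1 ≤ 3^ℓ such that the factor T(t)[i..i+3^{ℓ-2}−2] of length 3^{ℓ-2} − 1 is boolean and has period 3^{ℓ-3}, hence has exponent 3 − 3^{3-ℓ}. -/

import Mathlib

/-- The alphabet B = {0, 1, ?}. -/
inductive B : Type
  | b0 : B
  | b1 : B
  | bq : B
deriving DecidableEq, Inhabited, Repr

/-- The six Stewart patterns a = 01?, b = 10?, c = 0?1, d = 1?0, e = ?01, f = ?10. -/
inductive A : Type
  | a : A
  | b : A
  | c : A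
  | d : A
  | e : A
  | f : A
deriving DecidableEq, Inhabited, Repr

open B in
/-- The length-3 word over B associated with a Stewart pattern. -/
def pat : A → List B
  | .a => [b0, b1, bq]
  | .b => [b1, b0, bq]
  | .c => [b0, bq, b1]
  | .d => [b1, bq, b0]
  | .e => [bq, b0, b1]
  | .f => [bq, b1, b0]

/-- Replace the occurrences of `?` in the first word, in order,
by the symbols of the second word. -/
def fill : List B → List B → List B
  | [], _ => []
  | B.bq :: rest, s :: ss => s :: fill rest ss
  | B.bq :: rest, [] => B.bq :: fill rest []
  | x :: rest, ss => x :: fill rest ss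

/-- Helper: the finite Stewart word of the *reverse* of `t`. -/
def Trev : List A → List B
  | [] => [B.bq]
  | g :: t => fill (Trev t ++ Trev t ++ Trev t) (pat g)

/-- The finite Stewart word `T(t)`, of length `3 ^ t.length`:
`T(ε) = ?`, and `T(t g)` is obtained from `T(t)T(t)T(t)` by replacing its
three occurrences of `?`, in order, by the three symbols of the pattern `g`. -/
def stewT (t : List A) : List B := Trev t.reverse

/-- The length-`r` prefix of an infinite sequence of Stewart patterns, as a list. -/
def prefT (t : ℕ → A) (r : ℕ) : List A := List.ofFn (fun i : Fin r => t i)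

/-- The infinite Stewart word `T(𝐭)`: its symbol at position `n` is the eventual
value of `T(t_0 ⋯ t_{r-1})[n]` as `r → ∞`. -/
noncomputable def stewInf (t : ℕ → A) (n : ℕ) : B :=
  Classical.epsilon (fun v : B => ∃ R : ℕ, ∀ r ≥ R, (stewT (prefT t r)).getD n B.bq = v)

/-- `w` occurs as a factor of the infinite word `x`. -/
def FactorOf (w : List B) (x : ℕ → B) : Prop :=
  ∃ i : ℕ, ∀ j : ℕ, j < w.length → w.getD j B.bq = x (i + j)

/-- `w` has period `p ≥ 1`: `w[i] = w[i+p]` for all `0 ≤ i < |w| - p`. -/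
def HasPeriod (w : List B) (p : ℕ) : Prop :=
  1 ≤ p ∧ ∀ i : ℕ, i + p < w.length → w.getD i B.bq = w.getD (i + p) B.bq

/-- The least period `per(w)` of a word. -/
noncomputable def leastPeriod (w : List B) : ℕ := sInf {p | HasPeriod w p}

/-- The exponent `exp(w) = |w| / per(w)` of a word. -/
noncomputable def expo (w : List B) : ℝ := (w.length : ℝ) / (leastPeriod w : ℝ)

/-- The Hamming distance between two Stewart patterns: the number of positions
`p ∈ {0,1,2}` at which the length-3 words differ. -/
def ham (g h : A) : ℕ :=
  (Finset.univ.filter fun p : Fin 3 => (pat g).getD p B.bq ≠ (pat h).getD p B.bq).card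

/-- `t` is ultimately periodic. -/
def UltPeriodic (t : ℕ → A) : Prop :=
  ∃ N : ℕ, ∃ p : ℕ, 1 ≤ p ∧ ∀ n ≥ N, t (n + p) = t n

/-- An infinite word `x` is 3-automatic: there is a finite automaton with output,
reading base-3 representations least-significant-digit first (trailing zeros
allowed), computing `x`. -/
def IsThreeAutomatic (x : ℕ → B) : Prop :=
  ∃ (Q : Type) (_ : Finite Q) (δ : Q → Fin 3 → Q) (q0 : Q) (τ : Q → B),
    ∀ (r : ℕ) (e : Fin r → Fin 3),
      τ (List.foldl δ q0 (List.ofFn fun i => e i)) =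
        x (∑ i : Fin r, (e i).val * 3 ^ (i : ℕ))

lemma fill_nil (l : List B) : fill l [] = l := by
  induction l with
  | nil => rfl
  | cons x xs ih => cases x <;> simp [fill, ih]

lemma fill_single (l : List B) (s : B) : fill l [s] = l.set (l.idxOf B.bq) s := by
  induction l with
  | nil => rfl
  | cons x xs ih => cases x <;> simp [fill, List.idxOf_cons, ih, fill_nil]

lemma length_fill (l ss : List B) : (fill l ss).length = l.length := by
  induction l generalizing ss with
  | nil => rfl
  | cons x xs ih => cases x <;> cases ss <;> simp [fill, ih]

lemma fill_append (l l' : List B) (h : l.count B.bq = 1) (s : B) (ss : List B) :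
    fill (l ++ l') (s :: ss) = fill l [s] ++ fill l' ss := by
  induction l with
  | nil => simp at h
  | cons x xs ih =>
    cases x with
    | bq =>
      have hx : xs.count B.bq = 0 := by simpa using h
      have hnm : B.bq ∉ xs := by simpa [List.count_eq_zero] using hx
      clear h ih
      simp only [List.cons_append, fill, fill_nil, List.cons.injEq, true_and]
      induction xs with
      | nil => rfl
      | cons y ys ih2 =>
        simp only [List.mem_cons, not_or] at hnm
        cases y <;> simp_all [fill]
    | b0 =>
      have : xs.count B.bq = 1 := by simpa using h
      simp [fill, ih this]
    | b1 =>
      have : xs.count B.bq = 1 := by simpa using h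
      simp [fill, ih this]

lemma count_fill_single (l : List B) (s : B) (h : l.count B.bq = 1) :
    (fill l [s]).count B.bq = if s = B.bq then 1 else 0 := by
  induction l with
  | nil => simp at h
  | cons x xs ih =>
    cases x with
    | bq =>
      have hx : xs.count B.bq = 0 := by simpa using h
      simp [fill, fill_nil, hx, List.count_cons]
    | b0 =>
      have : xs.count B.bq = 1 := by simpa using h
      simp [fill, ih this, List.count_cons]
    | b1 =>
      have : xs.count B.bq = 1 := by simpa using h
      simp [fill, ih this, List.count_cons]

lemma fill_id (l : List B) : fill l [B.bq] = l := by
  induction l with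
  | nil => rfl
  | cons x xs ih => cases x <;> simp [fill, fill_nil, ih]

lemma fill3 (L : List B) (h : L.count B.bq = 1) (a b c : B) :
    fill (L ++ L ++ L) [a, b, c] = fill L [a] ++ (fill L [b] ++ fill L [c]) := by
  rw [List.append_assoc, fill_append L (L ++ L) h, fill_append L L h]

lemma Trev_cons (g : A) (t : List A) (h : (Trev t).count B.bq = 1) :
    Trev (g :: t) = fill (Trev t) [(pat g).getD 0 B.bq] ++
      (fill (Trev t) [(pat g).getD 1 B.bq] ++ fill (Trev t) [(pat g).getD 2 B.bq]) := by
  obtain ⟨a, b, c, hp⟩ : ∃ a b c, pat g = [a, b, c] := by cases g <;> exact ⟨_, _, _, rfl⟩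
  show fill (Trev t ++ Trev t ++ Trev t) (pat g) = _
  rw [hp, fill3 _ h]
  rfl

lemma count_Trev (t : List A) : (Trev t).count B.bq = 1 := by
  induction t with
  | nil => rfl
  | cons g t ih =>
    rw [Trev_cons g t ih, List.count_append, List.count_append,
      count_fill_single _ _ ih, count_fill_single _ _ ih, count_fill_single _ _ ih]
    cases g <;> simp [pat]

lemma length_Trev (t : List A) : (Trev t).length = 3 ^ t.length := by
  induction t with
  | nil => rfl
  | cons g t ih =>
    show (fill (Trev t ++ Trev t ++ Trev t) (pat g)).length = _
    rw [length_fill]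
    simp [ih, pow_succ]
    ring

def qp (t : List A) : ℕ := List.idxOf B.bq (Trev t)

lemma qp_lt (t : List A) : qp t < 3 ^ t.length := by
  rw [← length_Trev]
  exact List.idxOf_lt_length_iff.2 (List.count_pos_iff.1 (by rw [count_Trev]; norm_num))

lemma getD_qp (t : List A) : (Trev t).getD (qp t) B.bq = B.bq := by
  have h := qp_lt t
  rw [← length_Trev] at h
  rw [List.getD_eq_getElem _ _ h]
  exact List.getElem_idxOf h

lemma unique_pos : ∀ (L : List B), L.count B.bq = 1 → ∀ j < L.length,
    j ≠ List.idxOf B.bq L → L.getD j B.bq ≠ B.bq := by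
  intro L
  induction L with
  | nil => intro h; simp at h
  | cons x xs ih =>
    intro h j hj hne
    cases x with
    | bq =>
      have hx : xs.count B.bq = 0 := by simpa using h
      have hnm : B.bq ∉ xs := by simpa [List.count_eq_zero] using hx
      simp [List.idxOf_cons] at hne
      obtain ⟨j', rfl⟩ : ∃ j', j = j' + 1 := ⟨j - 1, by omega⟩
      simp only [List.getD_cons_succ]
      intro hc
      exact hnm (by
        rw [List.getD_eq_getElem _ _ (by simpa using hj)] at hc
        rw [← hc]; exact List.getElem_mem _)
    | b0 =>
      have hx : xs.count B.bq = 1 := by simpa using h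
      cases j with
      | zero => simp
      | succ j' =>
        simp only [List.getD_cons_succ]
        refine ih hx j' (by simpa using hj) ?_
        simp [List.idxOf_cons] at hne
        omega
    | b1 =>
      have hx : xs.count B.bq = 1 := by simpa using h
      cases j with
      | zero => simp
      | succ j' =>
        simp only [List.getD_cons_succ]
        refine ih hx j' (by simpa using hj) ?_
        simp [List.idxOf_cons] at hne
        omega


lemma mod_unique {n a b o p : ℕ} (hn : 0 < n) (h : a * n + o = b * n + p)
    (ho : o < n) (hp : p < n) : o = p ∧ a = b := by
  have h1 : o = p := by
    have h2 : (o + a * n) % n = (p + b * n) % n := by rw [add_comm o, add_comm p, h]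
    simp only [Nat.add_mul_mod_self_right] at h2
    rwa [Nat.mod_eq_of_lt ho, Nat.mod_eq_of_lt hp] at h2
  subst h1
  exact ⟨rfl, Nat.eq_of_mul_eq_mul_right hn (by omega)⟩

lemma small_bound {j o n : ℕ} (hj : j < 3) (ho : o < n) : j * n + o < 3 * n := by
  have h1 : j * n ≤ 2 * n := Nat.mul_le_mul_right n (by omega)
  omega

lemma indexOf_Trev (t : List A) : List.idxOf B.bq (Trev t) = qp t := rfl

lemma lev (g : A) (t : List A) (j o : ℕ) (hj : j < 3) (ho : o < 3 ^ t.length) :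
    (Trev (g :: t)).getD (j * 3 ^ t.length + o) B.bq =
      if o = qp t then (pat g).getD j B.bq else (Trev t).getD o B.bq := by
  have hc := count_Trev t
  have hlen := length_Trev t
  have hqp := qp_lt t
  rw [Trev_cons g t hc]
  have hlf : ∀ s, (fill (Trev t) [s]).length = 3 ^ t.length := fun s => by
    rw [length_fill, hlen]
  have key : ∀ s, (fill (Trev t) [s]).getD o B.bq =
      if o = qp t then s else (Trev t).getD o B.bq := by
    intro s
    rw [fill_single, indexOf_Trev]
    rw [List.getD_eq_getElem _ _ (by rw [List.length_set, hlen]; exact ho)]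
    rw [List.getElem_set]
    by_cases hqo : o = qp t
    · rw [if_pos hqo.symm, if_pos hqo]
    · rw [if_neg (fun hh => hqo hh.symm), if_neg hqo,
        List.getD_eq_getElem _ _ (by rw [hlen]; exact ho)]
  interval_cases j
  · rw [zero_mul, zero_add, List.getD_append _ _ _ _ (by rw [hlf]; exact ho), key]
  · rw [List.getD_append_right _ _ _ _ (by rw [hlf]; omega)]
    have : 1 * 3 ^ t.length + o - (fill (Trev t) [(pat g).getD 0 B.bq]).length = o := by
      rw [hlf]; omega
    rw [this, List.getD_append _ _ _ _ (by rw [hlf]; exact ho), key]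
  · rw [List.getD_append_right _ _ _ _ (by rw [hlf]; omega)]
    have h2 : 2 * 3 ^ t.length + o - (fill (Trev t) [(pat g).getD 0 B.bq]).length
        = 1 * 3 ^ t.length + o := by rw [hlf]; omega
    rw [h2, List.getD_append_right _ _ _ _ (by rw [hlf]; omega)]
    have h3 : 1 * 3 ^ t.length + o - (fill (Trev t) [(pat g).getD 1 B.bq]).length = o := by
      rw [hlf]; omega
    rw [h3, key]

def ipat (g : A) : ℕ := List.idxOf B.bq (pat g)

lemma ipat_lt (g : A) : ipat g < 3 := by cases g <;> decide

lemma Trev_cons' (g : A) (t : List A) (a b c : B) (hp : pat g = [a, b, c]) :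
    Trev (g :: t) = fill (Trev t) [a] ++
      (fill (Trev t) [b] ++ fill (Trev t) [c]) := by
  show fill (Trev t ++ Trev t ++ Trev t) (pat g) = _
  rw [hp, fill3 _ (count_Trev t)]

lemma qp_cons (g : A) (t : List A) :
    qp (g :: t) = ipat g * 3 ^ t.length + qp t := by
  have hc := count_Trev t
  have hlen := length_Trev t
  have hnm : ∀ s : B, s ≠ B.bq → B.bq ∉ fill (Trev t) [s] := by
    intro s hs
    rw [← List.count_eq_zero (a := B.bq)]
    rw [count_fill_single _ _ hc, if_neg hs]
  have hmem : B.bq ∈ Trev t := List.count_pos_iff.1 (by rw [count_Trev]; norm_num)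
  show List.idxOf B.bq (Trev (g :: t)) = _
  cases g
  case a =>
    rw [Trev_cons' A.a t B.b0 B.b1 B.bq rfl,
      List.idxOf_append_of_notMem (hnm _ (by decide)),
      List.idxOf_append_of_notMem (hnm _ (by decide)),
      fill_id, indexOf_Trev, length_fill, length_fill, hlen]
    show _ = 2 * 3 ^ t.length + qp t
    ring
  case b =>
    rw [Trev_cons' A.b t B.b1 B.b0 B.bq rfl,
      List.idxOf_append_of_notMem (hnm _ (by decide)),
      List.idxOf_append_of_notMem (hnm _ (by decide)),
      fill_id, indexOf_Trev, length_fill, length_fill, hlen]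
    show _ = 2 * 3 ^ t.length + qp t
    ring
  case c =>
    rw [Trev_cons' A.c t B.b0 B.bq B.b1 rfl,
      List.idxOf_append_of_notMem (hnm _ (by decide)),
      List.idxOf_append_of_mem (by rw [fill_id]; exact hmem),
      fill_id, indexOf_Trev, length_fill, hlen]
    show _ = 1 * 3 ^ t.length + qp t
    ring
  case d =>
    rw [Trev_cons' A.d t B.b1 B.bq B.b0 rfl,
      List.idxOf_append_of_notMem (hnm _ (by decide)),
      List.idxOf_append_of_mem (by rw [fill_id]; exact hmem),
      fill_id, indexOf_Trev, length_fill, hlen]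
    show _ = 1 * 3 ^ t.length + qp t
    ring
  case e =>
    rw [Trev_cons' A.e t B.bq B.b0 B.b1 rfl,
      List.idxOf_append_of_mem (by rw [fill_id]; exact hmem),
      fill_id, indexOf_Trev]
    show _ = 0 * 3 ^ t.length + qp t
    ring
  case f =>
    rw [Trev_cons' A.f t B.bq B.b1 B.b0 rfl,
      List.idxOf_append_of_mem (by rw [fill_id]; exact hmem),
      fill_id, indexOf_Trev]
    show _ = 0 * 3 ^ t.length + qp t
    ring

lemma pow_len1 (s0 : A) (w : List A) : (3:ℕ) ^ (s0 :: w).length = 3 ^ w.length * 3 := by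
  simp [pow_succ]

lemma chain (g h s0 : A) (w : List A) (Bn o : ℕ) (hB : Bn < 27) (ho : o < 3 ^ w.length)
    (hne : o ≠ qp w) :
    (Trev (g :: h :: s0 :: w)).getD (Bn * 3 ^ w.length + o) B.bq = (Trev w).getD o B.bq := by
  have hn0 : 0 < 3 ^ w.length := pow_pos (by norm_num) _
  have hn1 : 0 < 3 ^ (s0 :: w).length := pow_pos (by norm_num) _
  obtain ⟨j3, j2, j1, h3, h2, h1, rfl⟩ :
      ∃ j3 j2 j1, j3 < 3 ∧ j2 < 3 ∧ j1 < 3 ∧ Bn = 9 * j3 + 3 * j2 + j1 :=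
    ⟨Bn / 9, Bn % 9 / 3, Bn % 3, by omega, by omega, by omega, by omega⟩
  have hqpw := qp_lt w
  have e3 : (9 * j3 + 3 * j2 + j1) * 3 ^ w.length + o
      = j3 * 3 ^ (h :: s0 :: w).length + (j2 * 3 ^ (s0 :: w).length + (j1 * 3 ^ w.length + o)) := by
    simp only [pow_len1]
    ring
  have b1 : j1 * 3 ^ w.length + o < 3 ^ (s0 :: w).length := by
    rw [pow_len1]
    have := small_bound h1 ho
    omega
  have b2 : j2 * 3 ^ (s0 :: w).length + (j1 * 3 ^ w.length + o) < 3 ^ (h :: s0 :: w).length := by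
    rw [pow_len1 h (s0 :: w)]
    have := small_bound h2 b1
    omega
  have c2 : j1 * 3 ^ w.length + o ≠ qp (s0 :: w) := by
    rw [qp_cons s0 w]
    intro hcontra
    exact hne (mod_unique hn0 hcontra ho hqpw).1
  have c3 : j2 * 3 ^ (s0 :: w).length + (j1 * 3 ^ w.length + o) ≠ qp (h :: s0 :: w) := by
    rw [qp_cons h (s0 :: w), qp_cons s0 w]
    intro hcontra
    have hb' : ipat s0 * 3 ^ w.length + qp w < 3 ^ (s0 :: w).length := by
      rw [pow_len1]
      have := small_bound (ipat_lt s0) hqpw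
      omega
    have h5 := (mod_unique hn1 hcontra b1 hb').1
    exact hne (mod_unique hn0 h5 ho hqpw).1
  rw [e3, lev g _ j3 _ h3 b2, if_neg c3, lev h _ j2 _ h2 b1, if_neg c2,
    lev s0 _ j1 _ h1 ho, if_neg hne]

lemma spec (g h s0 : A) (w : List A) (B0 : ℕ) (hB0 : B0 < 9) (hc : B0 / 3 ≠ ipat h) :
    (Trev (g :: h :: s0 :: w)).getD ((9 + B0) * 3 ^ w.length + qp w) B.bq =
      if B0 % 3 = ipat s0 then (pat h).getD (B0 / 3) B.bq else (pat s0).getD (B0 % 3) B.bq := by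
  have hn0 : 0 < 3 ^ w.length := pow_pos (by norm_num) _
  have hn1 : 0 < 3 ^ (s0 :: w).length := pow_pos (by norm_num) _
  have hqpw := qp_lt w
  obtain ⟨c, β, hcb, hβ, rfl⟩ :
      ∃ c β, c < 3 ∧ β < 3 ∧ B0 = 3 * c + β :=
    ⟨B0 / 3, B0 % 3, by omega, by omega, by omega⟩
  have hdiv : (3 * c + β) / 3 = c := by omega
  have hmod : (3 * c + β) % 3 = β := by omega
  rw [hdiv] at hc
  rw [hdiv, hmod]
  have e3 : (9 + (3 * c + β)) * 3 ^ w.length + qp w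
      = 1 * 3 ^ (h :: s0 :: w).length + (c * 3 ^ (s0 :: w).length + (β * 3 ^ w.length + qp w)) := by
    simp only [pow_len1]
    ring
  have b1 : β * 3 ^ w.length + qp w < 3 ^ (s0 :: w).length := by
    rw [pow_len1]
    have := small_bound hβ hqpw
    omega
  have b2 : c * 3 ^ (s0 :: w).length + (β * 3 ^ w.length + qp w) < 3 ^ (h :: s0 :: w).length := by
    rw [pow_len1 h (s0 :: w)]
    have := small_bound hcb b1
    omega
  have c3 : c * 3 ^ (s0 :: w).length + (β * 3 ^ w.length + qp w) ≠ qp (h :: s0 :: w) := by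
    rw [qp_cons h (s0 :: w), qp_cons s0 w]
    intro hcontra
    have hb' : ipat s0 * 3 ^ w.length + qp w < 3 ^ (s0 :: w).length := by
      rw [pow_len1]
      have := small_bound (ipat_lt s0) hqpw
      omega
    exact hc (mod_unique hn1 hcontra b1 hb').2
  rw [e3, lev g _ 1 _ (by norm_num) b2, if_neg c3]
  by_cases hβi : β = ipat s0
  · rw [if_pos hβi]
    have : β * 3 ^ w.length + qp w = qp (s0 :: w) := by rw [qp_cons s0 w, hβi]
    rw [this] at b1 ⊢
    rw [lev h _ c _ hcb (lt_of_lt_of_le b1 (le_refl _)), if_pos rfl]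
  · rw [if_neg hβi]
    have c2 : β * 3 ^ w.length + qp w ≠ qp (s0 :: w) := by
      rw [qp_cons s0 w]
      intro hcontra
      exact hβi (mod_unique hn0 hcontra hqpw hqpw).2
    rw [lev h _ c _ hcb b1, if_neg c2, lev s0 _ β _ hβ hqpw, if_pos rfl]

lemma hp_sub {w : List B} {a b : ℕ} (hab : b < a) (ha : HasPeriod w a) (hb : HasPeriod w b)
    (hlen : a + b ≤ w.length) : HasPeriod w (a - b) := by
  refine ⟨by omega, fun i hi => ?_⟩
  by_cases hia : i + a < w.length
  · have h1 := ha.2 i hia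
    have h2 := hb.2 (i + (a - b)) (by omega)
    rw [h1, h2]
    congr 1
    omega
  · have h1 := hb.2 (i - b) (by omega)
    have h2 := ha.2 (i - b) (by omega)
    have e1 : i - b + b = i := by omega
    have e2 : i - b + a = i + (a - b) := by omega
    rw [e1] at h1
    rw [e2] at h2
    rw [← h1, h2]

lemma hp_gcd {w : List B} : ∀ s a b, a + b = s → HasPeriod w a → HasPeriod w b →
    a + b ≤ w.length → HasPeriod w (Nat.gcd a b) := by
  intro s
  induction s using Nat.strong_induction_on with
  | _ s ih =>
    intro a b hs ha hb hlen
    have ha1 := ha.1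
    have hb1 := hb.1
    rcases lt_trichotomy a b with hab | hab | hab
    · have h1 := hp_sub hab hb ha (by omega)
      have h2 := ih (a + (b - a)) (by omega) a (b - a) rfl ha h1 (by omega)
      rwa [Nat.gcd_sub_self_right (by omega)] at h2
    · subst hab
      rwa [Nat.gcd_self]
    · have h1 := hp_sub hab ha hb (by omega)
      have h2 := ih (a - b + b) (by omega) (a - b) b rfl h1 hb (by omega)
      rwa [Nat.gcd_sub_self_left (by omega)] at h2

lemma hp_mul {w : List B} {d : ℕ} (h : HasPeriod w d) (m : ℕ) (hm : 1 ≤ m) :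
    HasPeriod w (m * d) := by
  refine ⟨Nat.mul_pos hm h.1, ?_⟩
  have key : ∀ m i, i + m * d < w.length → w.getD i B.bq = w.getD (i + m * d) B.bq := by
    intro m
    induction m with
    | zero => intro i hi; simp
    | succ m ihm =>
      intro i hi
      have e : (m + 1) * d = m * d + d := by ring
      rw [e] at hi ⊢
      have h1 := ihm i (by omega)
      have h2 := h.2 (i + m * d) (by omega)
      rw [h1, h2, add_assoc]
  exact key m

lemma hp_dvd {w : List B} {d k : ℕ} (h : HasPeriod w d) (hdk : d ∣ k) (hk : 1 ≤ k) :
    HasPeriod w k := by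
  obtain ⟨m, rfl⟩ := hdk
  have hm : 1 ≤ m := by
    rcases Nat.eq_zero_or_pos m with rfl | hm
    · simp at hk
    · exact hm
  have h2 := hp_mul h m hm
  rwa [mul_comm m d] at h2

instance : Fintype A := ⟨⟨↑[A.a, A.b, A.c, A.d, A.e, A.f], by decide⟩, fun x => by cases x <;> decide⟩
instance : Fintype B := ⟨⟨↑[B.b0, B.b1, B.bq], by decide⟩, fun x => by cases x <;> decide⟩

def vstar : A → B
  | .a => B.b1
  | .b => B.b0
  | .c => B.b0
  | .d => B.b1
  | .e => B.b0
  | .f => B.b1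

def betaIdx : A → ℕ
  | .a => 1
  | .b => 1
  | _ => 0

def cIdx (h s0 : A) : ℕ := List.idxOf (vstar s0) (pat h)

/-- the common boolean value of the two adjacent specials -/
def svB (h s0 : A) (β : ℕ) : B :=
  if β = ipat s0 then (pat h).getD (cIdx h s0) B.bq else (pat s0).getD β B.bq

lemma F1 : ∀ h s0 : A, cIdx h s0 < 3 ∧ cIdx h s0 ≠ ipat h ∧
    (pat h).getD (cIdx h s0) B.bq = vstar s0 := by decide

lemma F2 : ∀ h s0 : A, betaIdx s0 ≤ 1 ∧
    svB h s0 (betaIdx s0) = svB h s0 (betaIdx s0 + 1) ∧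
    svB h s0 (betaIdx s0) ≠ B.bq := by decide

lemma F3 : ∀ (s1 : A) (v : B), v ≠ B.bq →
    (if (0:ℕ) = ipat s1 then v else (pat s1).getD 0 B.bq) ≠
      (if (1:ℕ) = ipat s1 then v else (pat s1).getD 1 B.bq) ∨
    (if (1:ℕ) = ipat s1 then v else (pat s1).getD 1 B.bq) ≠
      (if (2:ℕ) = ipat s1 then v else (pat s1).getD 2 B.bq) := by decide

set_option maxHeartbeats 1600000 in
lemma main (g h s0 s1 : A) (r : List A) :
    ∃ i : ℕ,
      i + (3 ^ (r.length + 2) - 1) ≤ 3 ^ (r.length + 4) ∧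
      (∀ s ∈ ((Trev (g :: h :: s0 :: s1 :: r)).drop i).take (3 ^ (r.length + 2) - 1), s ≠ B.bq) ∧
      HasPeriod (((Trev (g :: h :: s0 :: s1 :: r)).drop i).take (3 ^ (r.length + 2) - 1))
        (3 ^ (r.length + 1)) ∧
      ¬ HasPeriod (((Trev (g :: h :: s0 :: s1 :: r)).drop i).take (3 ^ (r.length + 2) - 1))
        (3 ^ r.length) := by
  classical
  set k := 3 ^ r.length with hk0
  have hk : 0 < k := by rw [hk0]; positivity
  have hp92 : (3:ℕ) ^ (r.length + 2) = 9 * k := by rw [hk0, pow_add]; ring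
  have hp31 : (3:ℕ) ^ (r.length + 1) = 3 * k := by rw [hk0, pow_add]; ring
  have hp814 : (3:ℕ) ^ (r.length + 4) = 81 * k := by rw [hk0, pow_add]; ring
  rw [hp92, hp31, hp814]
  set T := Trev (g :: h :: s0 :: s1 :: r) with hT
  set N := Trev (s1 :: r) with hN
  have hTlen : T.length = 81 * k := by
    rw [hT, length_Trev, show (g :: h :: s0 :: s1 :: r).length = r.length + 4 by simp, hp814]
  have hNlen : N.length = 3 * k := by
    rw [hN, length_Trev, show (s1 :: r).length = r.length + 1 by simp, hp31]
  have hn3 : (3:ℕ) ^ (s1 :: r).length = 3 * k := by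
    rw [show (s1 :: r).length = r.length + 1 by simp, hp31]
  -- abstract the small quantities
  obtain ⟨p0, hp0E⟩ : ∃ x, qp r = x := ⟨_, rfl⟩
  have hp0 : p0 < k := by rw [← hp0E, hk0]; exact qp_lt r
  obtain ⟨i1, hi1E⟩ : ∃ x, ipat s1 = x := ⟨_, rfl⟩
  have hi1 : i1 < 3 := by rw [← hi1E]; exact ipat_lt s1
  obtain ⟨p, hpE⟩ : ∃ x, qp (s1 :: r) = x := ⟨_, rfl⟩
  have hpe : p = i1 * k + p0 := by
    rw [← hpE, qp_cons, hi1E, hp0E, ← hk0]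
  have hi1k : i1 * k ≤ 2 * k := Nat.mul_le_mul_right k (by omega)
  have hplt : p < 3 * k := by omega
  obtain ⟨c, hcE⟩ : ∃ x, cIdx h s0 = x := ⟨_, rfl⟩
  obtain ⟨hc3, hcne, hcv⟩ := F1 h s0
  obtain ⟨hβ1, hsveq, hsvne⟩ := F2 h s0
  obtain ⟨β, hβE⟩ : ∃ x, betaIdx s0 = x := ⟨_, rfl⟩
  rw [hcE] at hc3 hcne hcv
  rw [hβE] at hβ1 hsveq hsvne
  set B0 := 3 * c + β with hB0d
  have hB07 : B0 ≤ 7 := by omega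
  set idx := (8 + B0) * (3 * k) + p + 1 with hidxd
  have hA8 : (8 + B0) * (3 * k) = 24 * k + B0 * (3 * k) := by ring
  have hA9 : (9 + B0) * (3 * k) = 27 * k + B0 * (3 * k) := by ring
  have hA10 : (9 + (B0 + 1)) * (3 * k) = 30 * k + B0 * (3 * k) := by ring
  have hB0b : B0 * (3 * k) ≤ 21 * k := by
    have := Nat.mul_le_mul_right (3 * k) hB07
    omega
  -- instantiated structural lemmas
  have hspec : ∀ b : ℕ, b < 9 → b / 3 ≠ ipat h →
      T.getD ((9 + b) * (3 * k) + p) B.bq =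
        if b % 3 = ipat s0 then (pat h).getD (b / 3) B.bq else (pat s0).getD (b % 3) B.bq := by
    intro b hb hbh
    have hsp := spec g h s0 (s1 :: r) b hb hbh
    rw [hn3, hpE] at hsp
    exact hsp
  have hchain : ∀ bn o : ℕ, bn < 27 → o < 3 * k → o ≠ p →
      T.getD (bn * (3 * k) + o) B.bq = N.getD o B.bq := by
    intro bn o hbn ho hop
    have hch := chain g h s0 (s1 :: r) bn o hbn (by rw [hn3]; exact ho) (by rw [hpE]; exact hop)
    rw [hn3] at hch
    exact hch
  have hsub : ∀ e : ℕ, e < 3 → e ≠ i1 →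
      T.getD ((9 + B0) * (3 * k) + (e * k + p0)) B.bq = (pat s1).getD e B.bq := by
    intro e he hei
    have hne : e * k + p0 ≠ p := by
      rw [hpe]
      intro hcon
      exact hei (mod_unique hk hcon hp0 hp0).2
    have hlt : e * k + p0 < 3 * k := small_bound he hp0
    rw [hchain (9 + B0) (e * k + p0) (by omega) hlt hne]
    have h2 := lev s1 r e p0 he (by rw [← hk0]; exact hp0)
    rw [← hk0] at h2
    rw [hN, h2, if_pos hp0E.symm]
  have hnsp : ∀ x : ℕ, x < 81 * k → x % (3 * k) ≠ p →
      T.getD x B.bq = N.getD (x % (3 * k)) B.bq := by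
    intro x hx hxp
    have h3k : 0 < 3 * k := by omega
    have hdm := Nat.div_add_mod x (3 * k)
    have hlt : x / (3 * k) < 27 := by
      rw [Nat.div_lt_iff_lt_mul h3k]
      omega
    have hch := hchain (x / (3 * k)) (x % (3 * k)) hlt (Nat.mod_lt _ h3k) hxp
    rw [← hch]
    congr 1
    rw [mul_comm] at hdm
    omega
  have hnspne : ∀ x : ℕ, x < 81 * k → x % (3 * k) ≠ p → T.getD x B.bq ≠ B.bq := by
    intro x hx hxp
    rw [hnsp x hx hxp, hN]
    refine unique_pos _ (count_Trev _) _ ?_ ?_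
    · rw [length_Trev, hn3]
      exact Nat.mod_lt _ (by omega)
    · rw [indexOf_Trev, hpE]
      exact hxp
  have hmodp : ∀ j : ℕ, j < 9 * k - 1 → (idx + j) % (3 * k) = p →
      j = 3 * k - 1 ∨ j = 6 * k - 1 := by
    intro j hj hm
    have h3k : 0 < 3 * k := by omega
    have hdm := Nat.div_add_mod (idx + j) (3 * k)
    rw [hm] at hdm
    set D := (idx + j) / (3 * k) with hD
    have hDgt : 8 + B0 < D := by
      by_contra hle
      push_neg at hle
      have h1 : 3 * k * D ≤ 3 * k * (8 + B0) := Nat.mul_le_mul_left _ hle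
      have e : 3 * k * (8 + B0) = (8 + B0) * (3 * k) := by ring
      omega
    have hsub2 : (D - (8 + B0)) * (3 * k) = D * (3 * k) - (8 + B0) * (3 * k) :=
      Nat.sub_mul _ _ _
    have hj1 : j + 1 = (D - (8 + B0)) * (3 * k) := by
      have e2 : D * (3 * k) = 3 * k * D := by ring
      have h1 : (8 + B0) * (3 * k) ≤ D * (3 * k) :=
        Nat.mul_le_mul_right _ (by omega)
      omega
    have hE3 : D - (8 + B0) < 3 := by
      by_contra hge
      push_neg at hge
      have h1 : 3 * (3 * k) ≤ (D - (8 + B0)) * (3 * k) := Nat.mul_le_mul_right _ hge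
      omega
    interval_cases hEE : (D - (8 + B0)) <;> omega
  have hidxbound : idx + (9 * k - 1) ≤ 81 * k := by omega
  have hFlen : ((T.drop idx).take (9 * k - 1)).length = 9 * k - 1 := by
    rw [List.length_take, List.length_drop, hTlen]
    omega
  have hFget : ∀ j, j < 9 * k - 1 →
      ((T.drop idx).take (9 * k - 1)).getD j B.bq = T.getD (idx + j) B.bq := by
    intro j hj
    have hj1 : j < ((T.drop idx).take (9 * k - 1)).length := by omega
    have hj2 : idx + j < T.length := by omega
    rw [List.getD_eq_getElem _ _ hj1, List.getD_eq_getElem _ _ hj2,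
      List.getElem_take, List.getElem_drop]
  have hspecB0 : T.getD (idx + (3 * k - 1)) B.bq = svB h s0 β := by
    have e : idx + (3 * k - 1) = (9 + B0) * (3 * k) + p := by omega
    rw [e, hspec B0 (by omega) (by rw [show B0 / 3 = c by omega]; exact hcne),
      show B0 % 3 = β by omega, show B0 / 3 = c by omega]
    unfold svB
    rw [hcE]
  have hspecB1 : T.getD (idx + (6 * k - 1)) B.bq = svB h s0 (β + 1) := by
    have e : idx + (6 * k - 1) = (9 + (B0 + 1)) * (3 * k) + p := by omega
    rw [e, hspec (B0 + 1) (by omega) (by rw [show (B0 + 1) / 3 = c by omega]; exact hcne),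
      show (B0 + 1) % 3 = β + 1 by omega, show (B0 + 1) / 3 = c by omega]
    unfold svB
    rw [hcE]
  refine ⟨idx, hidxbound, ?_, ?_, ?_⟩
  · -- boolean
    intro s hs
    obtain ⟨j, hj, rfl⟩ := List.mem_iff_getElem.1 hs
    have hj9 : j < 9 * k - 1 := by rw [hFlen] at hj; exact hj
    rw [show ((T.drop idx).take (9 * k - 1))[j] =
      ((T.drop idx).take (9 * k - 1)).getD j B.bq from (List.getD_eq_getElem _ _ hj).symm]
    rw [hFget j hj9]
    by_cases hsp : (idx + j) % (3 * k) = p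
    · rcases hmodp j hj9 hsp with rfl | rfl
      · rw [hspecB0]
        exact hsvne
      · rw [hspecB1, ← hsveq]
        exact hsvne
    · exact hnspne _ (by omega) hsp
  · -- period 3k
    refine ⟨by omega, fun j hj => ?_⟩
    rw [hFlen] at hj
    rw [hFget j (by omega), hFget (j + 3 * k) (by omega)]
    by_cases hsp : j = 3 * k - 1
    · subst hsp
      rw [show idx + (3 * k - 1 + 3 * k) = idx + (6 * k - 1) by omega, hspecB0, hspecB1]
      exact hsveq
    · have hm1 : (idx + j) % (3 * k) ≠ p := by
        intro hcon
        rcases hmodp j (by omega) hcon with rfl | rfl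
        · exact hsp rfl
        · omega
      have hm2 : (idx + (j + 3 * k)) % (3 * k) ≠ p := by
        rw [show idx + (j + 3 * k) = idx + j + 3 * k by omega, Nat.add_mod_right]
        exact hm1
      rw [hnsp (idx + j) (by omega) hm1, hnsp (idx + (j + 3 * k)) (by omega) hm2]
      congr 1
      rw [show idx + (j + 3 * k) = idx + j + 3 * k by omega, Nat.add_mod_right]
  · -- not period k
    intro hper
    have hvne := F3 s1 (svB h s0 β) hsvne
    rw [hi1E] at hvne
    have hval : ∀ e : ℕ, e < 3 →
        T.getD ((9 + B0) * (3 * k) + (e * k + p0)) B.bq =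
          if e = i1 then svB h s0 β else (pat s1).getD e B.bq := by
      intro e he
      by_cases hei : e = i1
      · rw [if_pos hei, show (9 + B0) * (3 * k) + (e * k + p0) = idx + (3 * k - 1) by
          subst hei; omega]
        exact hspecB0
      · rw [if_neg hei]
        exact hsub e he hei
    have hjbge : idx ≤ (9 + B0) * (3 * k) + p0 := by omega
    have hFj : ∀ e : ℕ, e < 3 →
        ((T.drop idx).take (9 * k - 1)).getD ((9 + B0) * (3 * k) + p0 - idx + e * k) B.bq =
          if e = i1 then svB h s0 β else (pat s1).getD e B.bq := by
      intro e he
      have hek : e * k ≤ 2 * k := Nat.mul_le_mul_right k (by omega)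
      have hlt : (9 + B0) * (3 * k) + p0 - idx + e * k < 9 * k - 1 := by omega
      rw [hFget _ hlt, show idx + ((9 + B0) * (3 * k) + p0 - idx + e * k)
        = (9 + B0) * (3 * k) + (e * k + p0) by omega]
      exact hval e he
    have hstep : ∀ e : ℕ, e < 2 →
        (if e = i1 then svB h s0 β else (pat s1).getD e B.bq) =
          if e + 1 = i1 then svB h s0 β else (pat s1).getD (e + 1) B.bq := by
      intro e he
      have hek : e * k ≤ 2 * k := Nat.mul_le_mul_right k (by omega)
      have h1 := hper.2 ((9 + B0) * (3 * k) + p0 - idx + e * k) (by rw [hFlen]; omega)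
      rw [hFj e (by omega)] at h1
      rw [show (9 + B0) * (3 * k) + p0 - idx + e * k + k
        = (9 + B0) * (3 * k) + p0 - idx + (e + 1) * k by
          have hx : (e + 1) * k = e * k + k := by ring
          omega] at h1
      rw [hFj (e + 1) (by omega)] at h1
      exact h1
    have h01 := hstep 0 (by norm_num)
    have h12 := hstep 1 (by norm_num)
    rcases hvne with hne | hne
    · exact hne (by simpa using h01)
    · exact hne (by simpa using h12)

theorem stmt_7 (t : List A) (hl : 4 ≤ t.length) :
    ∃ i : ℕ, i + (3 ^ (t.length - 2) - 1) ≤ 3 ^ t.length ∧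
      (∀ s ∈ ((stewT t).drop i).take (3 ^ (t.length - 2) - 1), s ≠ B.bq) ∧
      HasPeriod (((stewT t).drop i).take (3 ^ (t.length - 2) - 1)) (3 ^ (t.length - 3)) ∧
      expo (((stewT t).drop i).take (3 ^ (t.length - 2) - 1)) =
        3 - (3 : ℝ) ^ ((3 : ℤ) - (t.length : ℤ)) := by
  have hlr : t.reverse.length = t.length := List.length_reverse (as := t)
  obtain ⟨g, h, s0, s1, r, hu⟩ : ∃ g h s0 s1 r, t.reverse = g :: h :: s0 :: s1 :: r := by
    rcases hrev : t.reverse with _ | ⟨g, _ | ⟨h, _ | ⟨s0, _ | ⟨s1, r⟩⟩⟩⟩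
    all_goals first
      | exact ⟨_, _, _, _, _, rfl⟩
      | (exfalso; rw [hrev] at hlr; simp at hlr; omega)
  have hlen : t.length = r.length + 4 := by
    rw [← hlr, hu]; simp
  have hsT : stewT t = Trev (g :: h :: s0 :: s1 :: r) := by rw [stewT, hu]
  obtain ⟨i, hbound, hbool, hper, hnot⟩ := main g h s0 s1 r
  have hl2 : t.length - 2 = r.length + 2 := by omega
  have hl3 : t.length - 3 = r.length + 1 := by omega
  have hk : (0:ℕ) < 3 ^ r.length := pow_pos (by norm_num) _
  refine ⟨i, ?_, ?_, ?_, ?_⟩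
  · rw [hl2, hlen]; exact hbound
  · rw [hl2, hsT]; exact hbool
  · rw [hl2, hl3, hsT]; exact hper
  · rw [hl2, hsT]
    set F := ((Trev (g :: h :: s0 :: s1 :: r)).drop i).take (3 ^ (r.length + 2) - 1) with hF
    set n := 3 ^ (r.length + 1) with hn
    have hn3 : n = 3 * 3 ^ r.length := by rw [hn, pow_succ]; ring
    have hFlen : F.length = 3 * n - 1 := by
      rw [hF, List.length_take, List.length_drop, length_Trev,
        show (g :: h :: s0 :: s1 :: r).length = r.length + 4 by simp]
      have e1 : (3:ℕ) ^ (r.length + 2) = 3 * n := by rw [hn, pow_succ]; ring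
      have e2 : (3:ℕ) ^ (r.length + 4) = 27 * n := by
        rw [hn, show r.length + 4 = r.length + 1 + 3 from by omega, pow_add]
        ring
      omega
    have hlp : leastPeriod F = n := by
      apply le_antisymm
      · exact Nat.sInf_le hper
      · refine le_csInf ⟨n, hper⟩ ?_
        intro d hd
        by_contra hlt
        push_neg at hlt
        have hd1 := hd.1
        have hg : HasPeriod F (Nat.gcd d n) :=
          hp_gcd (d + n) d n rfl hd hper (by rw [hFlen]; omega)
        have hdvd : Nat.gcd d n ∣ n := Nat.gcd_dvd_right d n
        have hgne : Nat.gcd d n ≠ n := by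
          have h1 : Nat.gcd d n ≤ d := Nat.le_of_dvd (by omega) (Nat.gcd_dvd_left d n)
          omega
        obtain ⟨a, ha, hga⟩ := (Nat.dvd_prime_pow Nat.prime_three).1 (hn ▸ hdvd)
        have haa : a ≤ r.length := by
          rcases Nat.lt_or_ge a (r.length + 1) with hh | hh
          · omega
          · exfalso; apply hgne; rw [hga, hn]; congr 1; omega
        exact hnot (hp_dvd hg (by rw [hga]; exact pow_dvd_pow 3 haa) (by omega))
    unfold expo
    rw [hlp, hFlen, hlen]
    have hnne : (n:ℝ) ≠ 0 := by
      have : 0 < n := by omega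
      positivity
    have hcast : ((3 * n - 1 : ℕ) : ℝ) = 3 * (n:ℝ) - 1 := by
      have h1 : 1 ≤ 3 * n := by omega
      push_cast [h1]
      ring
    have hzp : (3:ℝ) ^ ((3:ℤ) - ((r.length + 4 : ℕ) : ℤ)) = (n:ℝ)⁻¹ := by
      have he : (3:ℤ) - ((r.length + 4 : ℕ) : ℤ) = -((r.length + 1 : ℕ) : ℤ) := by
        push_cast; ring
      rw [he, zpow_neg, zpow_natCast, hn]
      push_cast
      ring
    rw [hcast, hzp]
    field_simp
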